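/- Strong convergence of gradients for monotone elliptic problems with converging coefficients: let σ_m, σ be measurable with 0 < σ_# ≤ σ_m, σ ≤ σ^#, σ_m → σ a.e., and let φ_m, φ ∈ H^1(Ω) satisfy ∫_Ω σ_m ∇φ_m·∇w = F_m(w) and ∫_Ω σ ∇φ·∇w = F(w) for all test w, where F_m(φ_m − φ) − F(φ_m − φ) → 0 and φ_m ⇀ φ weakly in H^1(Ω). Then ∇φ_m → ∇φ strongly in L²(Ω)^n. -/

import Mathlib

/-! Subtracting the two tested equations gives, pointwise,
`σ_m |∇φ_m − ∇φ|² = (σ_m ∇φ_m − σ ∇φ)·(∇φ_m − ∇φ) − (σ_m − σ) ∇φ·(∇φ_m − ∇φ)`.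
Coercivity `σ_# ≤ σ_m` and Young's inequality on the last term yield
`σ_# ‖∇φ_m − ∇φ‖² ≤ 2 (F_m − F)(φ_m − φ) + σ_#⁻¹ ∫ (σ_m − σ)² |∇φ|²`,
and the last integral tends to `0` by dominated convergence. -/

open MeasureTheory Filter Topology

local notation "⟪" x ", " y "⟫" => @inner ℝ _ _ x y

section

variable {α : Type*} [MeasurableSpace α] {μ : Measure α}
  {E : Type*} [NormedAddCommGroup E] [InnerProductSpace ℝ E]

theorem MeasureTheory.MemLp.integrable_inner {f g : α → E} (hf : MemLp f 2 μ)
    (hg : MemLp g 2 μ) : Integrable (fun x => ⟪f x, g x⟫) μ := by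
  refine (L2.integrable_inner (𝕜 := ℝ) (hf.toLp f) (hg.toLp g)).congr ?_
  filter_upwards [hf.coeFn_toLp, hg.coeFn_toLp] with x hfx hgx
  rw [hfx, hgx]

theorem MeasureTheory.MemLp.integrable_mul_inner {s : α → ℝ} {f g : α → E} {K : ℝ}
    (hs : AEStronglyMeasurable s μ) (hsK : ∀ x, ‖s x‖ ≤ K) (hf : MemLp f 2 μ)
    (hg : MemLp g 2 μ) : Integrable (fun x => s x * ⟪f x, g x⟫) μ :=
  (hf.integrable_inner hg).bdd_mul hs (ae_of_all _ hsK)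

theorem mul_norm_sub_sq_le_inner_sub_inner {c s t : ℝ} (hc : 0 < c) (hcs : c ≤ s) (a b : E) :
    c * ‖a - b‖ ^ 2 ≤
      2 * (s * ⟪a, a - b⟫ - t * ⟪b, a - b⟫) + (s - t) ^ 2 * ‖b‖ ^ 2 / c := by
  have hsplit : s * ⟪a, a - b⟫ - t * ⟪b, a - b⟫ = s * ‖a - b‖ ^ 2 + (s - t) * ⟪b, a - b⟫ := by
    rw [← real_inner_self_eq_norm_sq, inner_sub_left a b (a - b)]
    ring
  have hcs_bound : |⟪b, a - b⟫| ≤ ‖b‖ * ‖a - b‖ := abs_real_inner_le_norm b (a - b)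
  -- Young: `2 |s - t| ‖b‖ ‖a - b‖ ≤ c ‖a - b‖² + (s - t)² ‖b‖² / c`
  have hyoung : 0 ≤ c ^ 2 * ‖a - b‖ ^ 2 + 2 * c * ((s - t) * ⟪b, a - b⟫) + (s - t) ^ 2 * ‖b‖ ^ 2 := by
    have hprod : |(s - t) * ⟪b, a - b⟫| ≤ |s - t| * (‖b‖ * ‖a - b‖) := by
      rw [abs_mul]
      exact mul_le_mul_of_nonneg_left hcs_bound (abs_nonneg _)
    nlinarith [neg_abs_le ((s - t) * ⟪b, a - b⟫), sq_nonneg (c * ‖a - b‖ - |s - t| * ‖b‖),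
      sq_abs (s - t)]
  have hexpand : 2 * (s * ‖a - b‖ ^ 2 + (s - t) * ⟪b, a - b⟫) + (s - t) ^ 2 * ‖b‖ ^ 2 / c
      - c * ‖a - b‖ ^ 2 = (c ^ 2 * ‖a - b‖ ^ 2 + 2 * c * ((s - t) * ⟪b, a - b⟫)
        + (s - t) ^ 2 * ‖b‖ ^ 2 + 2 * c * (s - c) * ‖a - b‖ ^ 2) / c := by
    field_simp
    ring
  have hsc : 0 ≤ 2 * c * (s - c) * ‖a - b‖ ^ 2 := by
    have := sub_nonneg.2 hcs
    positivity
  rw [hsplit, ← sub_nonneg, hexpand]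
  exact div_nonneg (add_nonneg hyoung hsc) hc.le

theorem tendsto_integral_mul_of_bounded_of_ae_tendsto_zero {ι : Type*} {l : Filter ι}
    [l.IsCountablyGenerated] {c : ι → α → ℝ} {f : α → ℝ} {K : ℝ}
    (hc : ∀ i, AEStronglyMeasurable (c i) μ) (hcK : ∀ i x, ‖c i x‖ ≤ K)
    (hlim : ∀ᵐ x ∂μ, Tendsto (fun i => c i x) l (𝓝 0)) (hf : Integrable f μ) :
    Tendsto (fun i => ∫ x, c i x * f x ∂μ) l (𝓝 0) := by
  have hdom := tendsto_integral_filter_of_dominated_convergence (fun x => K * ‖f x‖)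
    (Eventually.of_forall fun i => (hc i).mul hf.1) (Eventually.of_forall fun i =>
      ae_of_all _ fun x => by
        rw [Pi.mul_apply, norm_mul]
        exact mul_le_mul_of_nonneg_right (hcK i x) (norm_nonneg _))
    (hf.norm.const_mul K) (hlim.mono fun x hx => by simpa using hx.mul_const (f x))
  simpa using hdom

theorem mul_integral_norm_sub_sq_le {s t : α → ℝ} {f g : α → E} {c K : ℝ} (hc : 0 < c)
    (hs : AEStronglyMeasurable s μ) (ht : AEStronglyMeasurable t μ) (hcs : ∀ x, c ≤ s x)
    (hsK : ∀ x, ‖s x‖ ≤ K) (htK : ∀ x, ‖t x‖ ≤ K) (hf : MemLp f 2 μ) (hg : MemLp g 2 μ) :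
    c * ∫ x, ‖f x - g x‖ ^ 2 ∂μ ≤
      2 * (∫ x, s x * ⟪f x, f x - g x⟫ ∂μ - ∫ x, t x * ⟪g x, f x - g x⟫ ∂μ)
        + (∫ x, (s x - t x) ^ 2 * ‖g x‖ ^ 2 ∂μ) / c := by
  have hfg := hf.sub hg
  have hleft : Integrable (fun x => ‖f x - g x‖ ^ 2) μ :=
    (memLp_two_iff_integrable_sq_norm hfg.1).1 hfg
  have hs_int : Integrable (fun x => s x * ⟪f x, f x - g x⟫) μ :=
    hf.integrable_mul_inner hs hsK hfg
  have ht_int : Integrable (fun x => t x * ⟪g x, f x - g x⟫) μ :=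
    hg.integrable_mul_inner ht htK hfg
  have hst_int : Integrable (fun x => (s x - t x) ^ 2 * ‖g x‖ ^ 2) μ := by
    refine ((memLp_two_iff_integrable_sq_norm hg.1).1 hg).bdd_mul ((hs.sub ht).pow 2)
      (c := (K + K) ^ 2) (ae_of_all _ fun x => ?_)
    rw [norm_pow]
    exact pow_le_pow_left₀ (norm_nonneg _) ((norm_sub_le _ _).trans (add_le_add (hsK x) (htK x))) 2
  have hdiff : Integrable (fun x => s x * ⟪f x, f x - g x⟫ - t x * ⟪g x, f x - g x⟫) μ :=
    hs_int.sub ht_int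
  calc c * ∫ x, ‖f x - g x‖ ^ 2 ∂μ = ∫ x, c * ‖f x - g x‖ ^ 2 ∂μ := (integral_const_mul _ _).symm
    _ ≤ ∫ x, 2 * (s x * ⟪f x, f x - g x⟫ - t x * ⟪g x, f x - g x⟫)
          + (s x - t x) ^ 2 * ‖g x‖ ^ 2 / c ∂μ :=
      integral_mono (hleft.const_mul c) ((hdiff.const_mul 2).add (hst_int.div_const c))
        fun x => mul_norm_sub_sq_le_inner_sub_inner hc (hcs x) (f x) (g x)
    _ = _ := by
      rw [integral_add (hdiff.const_mul 2) (hst_int.div_const c),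
        integral_const_mul, integral_sub hs_int ht_int, integral_div]

end

theorem gradient_strong_convergence_general {n : ℕ} {Ω : Type*} [MeasureSpace Ω]
    (σs σb : ℝ) (hσs : 0 < σs)
    (σm : ℕ → Ω → ℝ) (σ : Ω → ℝ)
    (hσmmeas : ∀ m, AEMeasurable (σm m)) (hσmeas : AEMeasurable σ)
    (hσmb : ∀ m x, σs ≤ σm m x ∧ σm m x ≤ σb)
    (hσb : ∀ x, σs ≤ σ x ∧ σ x ≤ σb)
    (hae : ∀ᵐ x, Tendsto (fun m => σm m x) atTop (nhds (σ x)))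
    (gφm : ℕ → Ω → EuclideanSpace ℝ (Fin n)) (gφ : Ω → EuclideanSpace ℝ (Fin n))
    (hm2 : ∀ m, MemLp (gφm m) 2 volume) (h2 : MemLp gφ 2 volume)
    (Fm Gm : ℕ → ℝ)
    -- the two equations tested with w = φ_m − φ
    (heqm : ∀ m, (∫ x, σm m x * ⟪gφm m x, gφm m x - gφ x⟫) = Fm m)
    (heq : ∀ m, (∫ x, σ x * ⟪gφ x, gφm m x - gφ x⟫) = Gm m)
    (hFG : Tendsto (fun m => Fm m - Gm m) atTop (nhds 0)) :
    Tendsto (fun m => ∫ x, ‖gφm m x - gφ x‖ ^ 2) atTop (nhds 0) := by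
  have hσm_norm : ∀ m x, ‖σm m x‖ ≤ σb := fun m x => by
    rw [Real.norm_eq_abs, abs_le]; constructor <;> linarith [hσmb m x]
  have hσ_norm : ∀ x, ‖σ x‖ ≤ σb := fun x => by
    rw [Real.norm_eq_abs, abs_le]; constructor <;> linarith [hσb x]
  set δ : ℕ → ℝ := fun m => ∫ x, (σm m x - σ x) ^ 2 * ‖gφ x‖ ^ 2
  have hδ : Tendsto δ atTop (𝓝 0) := by
    refine tendsto_integral_mul_of_bounded_of_ae_tendsto_zero (K := σb ^ 2)
      (fun m => (((hσmmeas m).sub hσmeas).pow_const 2).aestronglyMeasurable)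
      (fun m x => ?_) (hae.mono fun x hx => ?_) ((memLp_two_iff_integrable_sq_norm h2.1).1 h2)
    · rw [norm_pow, Real.norm_eq_abs]
      exact pow_le_pow_left₀ (abs_nonneg _)
        (abs_sub_le_iff.2 ⟨by linarith [hσmb m x, hσb x], by linarith [hσmb m x, hσb x]⟩) 2
    · simpa using (hx.sub_const (σ x)).pow 2
  have hest : ∀ m, ∫ x, ‖gφm m x - gφ x‖ ^ 2 ≤ (2 * (Fm m - Gm m) + δ m / σs) / σs := fun m => by
    rw [le_div_iff₀' hσs, ← heqm m, ← heq m]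
    exact mul_integral_norm_sub_sq_le hσs (hσmmeas m).aestronglyMeasurable
      hσmeas.aestronglyMeasurable (fun x => (hσmb m x).1) (hσm_norm m) hσ_norm (hm2 m) h2
  have hbound : Tendsto (fun m => (2 * (Fm m - Gm m) + δ m / σs) / σs) atTop (𝓝 0) := by
    simpa using ((hFG.const_mul 2).add (hδ.div_const σs)).div_const σs
  exact tendsto_of_tendsto_of_tendsto_of_le_of_le tendsto_const_nhds hbound
    (fun m => integral_nonneg fun x => sq_nonneg _) hest

/-- Strong convergence of gradients for monotone elliptic problems with converging
coefficients: let `σ_m, σ` be measurable with `0 < σ_# ≤ σ_m, σ ≤ σ^#` and `σ_m → σ`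
a.e., and let `∇φ_m, ∇φ ∈ L²` satisfy the tested equations
`∫ σ_m ∇φ_m·∇(φ_m−φ) = F_m(φ_m−φ)` and `∫ σ ∇φ·∇(φ_m−φ) = F(φ_m−φ)` with
`F_m(φ_m−φ) − F(φ_m−φ) → 0`, and `∇φ_m ⇀ ∇φ` weakly in `L²`. Then
`∇φ_m → ∇φ` strongly in `L²(Ω)ⁿ`. -/
theorem gradient_strong_convergence {n : ℕ} {Ω : Type*} [MeasureSpace Ω]
    (σs σb : ℝ) (hσs : 0 < σs) (hσsb : σs ≤ σb)
    (σm : ℕ → Ω → ℝ) (σ : Ω → ℝ)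
    (hσmmeas : ∀ m, AEMeasurable (σm m)) (hσmeas : AEMeasurable σ)
    (hσmb : ∀ m x, σs ≤ σm m x ∧ σm m x ≤ σb)
    (hσb : ∀ x, σs ≤ σ x ∧ σ x ≤ σb)
    (hae : ∀ᵐ x, Tendsto (fun m => σm m x) atTop (nhds (σ x)))
    (gφm : ℕ → Ω → EuclideanSpace ℝ (Fin n)) (gφ : Ω → EuclideanSpace ℝ (Fin n))
    (hm2 : ∀ m, MemLp (gφm m) 2 volume) (h2 : MemLp gφ 2 volume)
    -- weak convergence ∇φ_m ⇀ ∇φ in L²(Ω)ⁿ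
    (hweak : ∀ g : Ω → EuclideanSpace ℝ (Fin n), MemLp g 2 volume →
      Tendsto (fun m => ∫ x, ⟪gφm m x, g x⟫) atTop (nhds (∫ x, ⟪gφ x, g x⟫)))
    (Fm Gm : ℕ → ℝ)
    -- the two equations tested with w = φ_m − φ
    (heqm : ∀ m, (∫ x, σm m x * ⟪gφm m x, gφm m x - gφ x⟫) = Fm m)
    (heq : ∀ m, (∫ x, σ x * ⟪gφ x, gφm m x - gφ x⟫) = Gm m)
    (hFG : Tendsto (fun m => Fm m - Gm m) atTop (nhds 0)) :
    Tendsto (fun m => ∫ x, ‖gφm m x - gφ x‖ ^ 2) atTop (nhds 0) :=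
  gradient_strong_convergence_general σs σb hσs σm σ hσmmeas hσmeas hσmb hσb hae gφm gφ hm2 h2 Fm Gm
    heqm heq hFG
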